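/- Let p be an odd prime, n ≥ 1, and let k, k', s, s' be nonnegative integers with k ≡ k' (mod p^n(p−1)), s' = s + s₀·p^n(p−1) for some s₀ ≥ 1 with s₀·p^n(p−1) ≥ n+1. Let f, f' ∈ ℤ_p[[q]][X] have the same degree in X and satisfy f ≡ f' (mod p^n) coefficientwise. Then (δ_k^s f)|ι_p ≡ δ_{k'}^{s'} f' (mod p^n), where δ_m is the operator ∑F_iX^i ↦ ∑ΘF_iX^i + (m−i)F_iX^{i+1}, δ_m^s its iterate with weights increasing by 2, and ι_p is applied to each X-coefficient by deleting the qⁿ-terms with p | n. -/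

import Mathlib

/-!
Fix the `q`-exponent `j`. On `j`-th coefficients `δ_m` acts by
`G_i ↦ j G_i + (m - i + 1) G_{i-1}`, so by induction the `j`-th coefficient of `(δ_w^t F)_{r+l}`
involves that of `F_l` with the integer weight `C(t,r) j^(t-r) (w+t-r-l)^(r)` (rising factorial),
`deltaIterWeight`. Replacing `(w, t)` by `(w', t + m)`, where `p^n(p-1) ∣ m`, `n ≤ m` and
`p^n ∣ w' - w`, keeps the weight unchanged mod `p^n` when `p ∤ j` and makes it `≡ 0` when `p ∣ j`;
this is `Θ^m ≡ ι_p`. The inputs are Euler's theorem `j^m ≡ 1`, the fact that a rising factorial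
is a polynomial in its argument, and `m ∣ (C(t+m,r) - C(t,r)) r!`, a difference of two falling
factorials.
-/

noncomputable section

/-- The operator `Θ = q·d/dq` on formal power series. -/
def thetaQ {R : Type*} [CommRing R] (f : PowerSeries R) : PowerSeries R :=
  PowerSeries.mk fun n => (n : R) * PowerSeries.coeff n f

/-- The operator `ι_p(∑ aₙ qⁿ) = ∑_{p ∤ n} aₙ qⁿ` on power series. -/
def iotaQ {R : Type*} [CommRing R] (p : ℕ) (f : PowerSeries R) : PowerSeries R :=
  PowerSeries.mk fun n => if p ∣ n then 0 else PowerSeries.coeff n f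

/-- `ι_p` applied to each `X`-coefficient of an element of `R[[q]][X]`. -/
def iotaPoly {R : Type*} [CommRing R] (p : ℕ) (F : Polynomial (PowerSeries R)) :
    Polynomial (PowerSeries R) :=
  F.sum fun i a => Polynomial.C (iotaQ p a) * Polynomial.X ^ i

/-- The algebraic Maaß–Shimura operator of weight `m`:
`δ_m(∑ F_i X^i) = ∑ (ΘF_i) X^i + (m - i) F_i X^{i+1}`. -/
def delta {R : Type*} [CommRing R] (m : ℤ) (F : Polynomial (PowerSeries R)) :
    Polynomial (PowerSeries R) :=
  F.sum fun i a =>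
    Polynomial.C (thetaQ a) * Polynomial.X ^ i
      + Polynomial.C (((m - (i : ℤ) : ℤ) : PowerSeries R) * a) * Polynomial.X ^ (i + 1)

/-- `δ_k^s = δ_{k+2s-2} ∘ ⋯ ∘ δ_{k+2} ∘ δ_k` (s factors). -/
def deltaIter {R : Type*} [CommRing R] (k : ℤ) :
    ℕ → Polynomial (PowerSeries R) → Polynomial (PowerSeries R)
  | 0 => id
  | s + 1 => fun F => delta (k + 2 * s) (deltaIter k s F)

open Finset Polynomial
open scoped Nat

lemma factorial_dvd_ascPochhammer_eval (A : ℤ) (r : ℕ) :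
    (r ! : ℤ) ∣ (ascPochhammer ℤ r).eval A := by
  have h := Ring.factorial_nsmul_multichoose_eq_ascPochhammer A r
  rw [ascPochhammer_smeval_eq_eval, nsmul_eq_mul] at h
  exact ⟨_, h.symm⟩

lemma dvd_choose_add_sub_choose_mul_factorial (s m r : ℕ) :
    (m : ℤ) ∣ (((s + m).choose r : ℤ) - s.choose r) * r ! := by
  have h := sub_dvd_eval_sub ((s + m : ℕ) : ℤ) (s : ℤ) (descPochhammer ℤ r)
  simp only [descPochhammer_eval_eq_descFactorial, Nat.descFactorial_eq_factorial_mul_choose] at h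
  push_cast at h
  simpa [sub_mul, mul_comm] using h

lemma dvd_choose_add_sub_choose_mul_ascPochhammer_eval (s m r : ℕ) (A : ℤ) :
    (m : ℤ) ∣ (((s + m).choose r : ℤ) - s.choose r) * (ascPochhammer ℤ r).eval A :=
  (dvd_choose_add_sub_choose_mul_factorial s m r).trans
    (mul_dvd_mul_left _ (factorial_dvd_ascPochhammer_eval A r))

lemma totient_prime_pow_dvd_mul_sub_one (p n : ℕ) (hp : p.Prime) :
    φ (p ^ n) ∣ p ^ n * (p - 1) := by
  rw [← Nat.totient_prime_pow_succ hp]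
  exact Nat.totient_dvd_of_dvd (pow_dvd_pow p n.le_succ)

lemma prime_pow_dvd_pow_sub_one {p n m j : ℕ} (hp : p.Prime) (hm : p ^ n * (p - 1) ∣ m)
    (hj : ¬p ∣ j) : (p : ℤ) ^ n ∣ (j : ℤ) ^ m - 1 := by
  obtain ⟨c, rfl⟩ := (totient_prime_pow_dvd_mul_sub_one p n hp).trans hm
  have hcop : j.Coprime (p ^ n) := Nat.Coprime.pow_right n (hp.coprime_iff_not_dvd.mpr hj).symm
  have h := ((Nat.ModEq.pow_totient hcop).pow c).symm
  rw [one_pow, ← pow_mul, Nat.modEq_iff_dvd] at h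
  exact_mod_cast h

def deltaIterWeight (w : ℤ) (j t r l : ℕ) : ℤ :=
  t.choose r * j ^ (t - r) * (ascPochhammer ℤ r).eval (w + t - (r + l))

lemma deltaIterWeight_zero (w : ℤ) (j r l : ℕ) :
    deltaIterWeight w j 0 r l = if r = 0 then 1 else 0 := by
  rcases r with _ | r <;> simp [deltaIterWeight]

lemma deltaIterWeight_succ_zero (w : ℤ) (j t l : ℕ) :
    deltaIterWeight w j (t + 1) 0 l = j * deltaIterWeight w j t 0 l := by
  simp [deltaIterWeight, pow_succ']

lemma deltaIterWeight_succ_succ (w : ℤ) (j t r l : ℕ) :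
    deltaIterWeight w j (t + 1) (r + 1) l
      = j * deltaIterWeight w j t (r + 1) l
        + (w + 2 * t - (r + l)) * deltaIterWeight w j t r l := by
  set B := w + t - (r + l)
  have hpow :
      (t.choose (r + 1) : ℤ) * j ^ (t - r) = t.choose (r + 1) * (j * j ^ (t - (r + 1))) := by
    rcases lt_or_ge r t with hrt | htr
    · rw [show t - r = t - (r + 1) + 1 by omega, pow_succ']
    · simp [Nat.choose_eq_zero_of_lt (Nat.lt_succ_of_le htr)]
  have hpascal : ((t + 1).choose (r + 1) : ℤ) = t.choose r + t.choose (r + 1) := by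
    exact_mod_cast Nat.choose_succ_succ' t r
  have habsorb : ((t : ℤ) + 1) * t.choose r = (t + 1).choose (r + 1) * ((r : ℤ) + 1) := by
    exact_mod_cast Nat.add_one_mul_choose_eq t r
  have hB : (ascPochhammer ℤ (r + 1)).eval (B - 1) = (B - 1) * (ascPochhammer ℤ r).eval B := by
    rw [ascPochhammer_succ_left, eval_mul, eval_comp]; simp
  simp only [deltaIterWeight, Nat.add_sub_add_right]
  push_cast
  rw [show w + (t + 1) - (r + 1 + l) = B by ring, show w + t - (r + 1 + l) = B - 1 by ring,
    show w + 2 * t - (r + l) = B + t by ring, hB, ascPochhammer_succ_eval]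
  linear_combination (j ^ (t - r) * (ascPochhammer ℤ r).eval B * (B - 1)) * hpascal
    + ((B - 1) * (ascPochhammer ℤ r).eval B) * hpow
    - (j ^ (t - r) * (ascPochhammer ℤ r).eval B) * habsorb

section WeightCongruence

variable {N w w' : ℤ} {j t m : ℕ}

lemma deltaIterWeight_add_sub_dvd (r l : ℕ) (hm : N ∣ m) (hj : N ∣ (j : ℤ) ^ m - 1)
    (hw : N ∣ w' - w) : N ∣ deltaIterWeight w' j (t + m) r l - deltaIterWeight w j t r l := by
  set A := w + t - (r + l)
  set A' := w' + (t + m : ℕ) - (r + l)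
  have hA : N ∣ A' - A := by
    rw [show A' - A = w' - w + m by simp only [A, A']; push_cast; ring]
    exact dvd_add hw hm
  have hP : N ∣ (ascPochhammer ℤ r).eval A' - (ascPochhammer ℤ r).eval A :=
    hA.trans (sub_dvd_eval_sub _ _ _)
  have hD := hm.trans (dvd_choose_add_sub_choose_mul_ascPochhammer_eval t m r A')
  change N ∣ ((t + m).choose r : ℤ) * j ^ (t + m - r) * (ascPochhammer ℤ r).eval A'
    - t.choose r * j ^ (t - r) * (ascPochhammer ℤ r).eval A
  rcases le_or_gt r t with hrt | htr
  · rw [show t + m - r = t - r + m by omega, pow_add]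
    have : ((t + m).choose r : ℤ) * (j ^ (t - r) * j ^ m) * (ascPochhammer ℤ r).eval A'
        - t.choose r * j ^ (t - r) * (ascPochhammer ℤ r).eval A
        = j ^ (t - r) *
          (j ^ m * ((((t + m).choose r : ℤ) - t.choose r) * (ascPochhammer ℤ r).eval A')
          + t.choose r * ((j ^ m - 1) * (ascPochhammer ℤ r).eval A'
            + ((ascPochhammer ℤ r).eval A' - (ascPochhammer ℤ r).eval A))) := by ring
    rw [this]
    exact dvd_mul_of_dvd_right (dvd_add (dvd_mul_of_dvd_right hD _)
      (dvd_mul_of_dvd_right (dvd_add (dvd_mul_of_dvd_left hj _) hP) _)) _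
  · rw [Nat.choose_eq_zero_of_lt htr, Nat.cast_zero, sub_zero] at hD
    rw [Nat.choose_eq_zero_of_lt htr, Nat.cast_zero, zero_mul, zero_mul, sub_zero, mul_right_comm]
    exact dvd_mul_of_dvd_left hD _

lemma deltaIterWeight_add_dvd {n : ℕ} (r l : ℕ) (hm : N ∣ m) (hj : N ∣ (j : ℤ) ^ n)
    (hnm : n ≤ m) : N ∣ deltaIterWeight w j (t + m) r l := by
  set A := w + (t + m : ℕ) - (r + l)
  have hD := hm.trans (dvd_choose_add_sub_choose_mul_ascPochhammer_eval t m r A)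
  have hC : N ∣ (t.choose r : ℤ) * j ^ (t + m - r) := by
    rcases le_or_gt r t with hrt | htr
    · exact dvd_mul_of_dvd_right (hj.trans (pow_dvd_pow _ (by omega))) _
    · simp [Nat.choose_eq_zero_of_lt htr]
  change N ∣ ((t + m).choose r : ℤ) * j ^ (t + m - r) * (ascPochhammer ℤ r).eval A
  rw [show ((t + m).choose r : ℤ) * j ^ (t + m - r) * (ascPochhammer ℤ r).eval A
      = j ^ (t + m - r) * ((((t + m).choose r : ℤ) - t.choose r) * (ascPochhammer ℤ r).eval A)
        + t.choose r * j ^ (t + m - r) * (ascPochhammer ℤ r).eval A by ring]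
  exact dvd_add (dvd_mul_of_dvd_right hD _) (dvd_mul_of_dvd_left hC _)

end WeightCongruence

section Coefficients

variable {R : Type*} [CommRing R]

@[simp] lemma thetaQ_zero : thetaQ (0 : PowerSeries R) = 0 := by
  ext n; simp [thetaQ]

@[simp] lemma iotaQ_zero (p : ℕ) : iotaQ p (0 : PowerSeries R) = 0 := by
  ext n; simp [iotaQ]

lemma coeff_thetaQ (a : PowerSeries R) (j : ℕ) :
    PowerSeries.coeff j (thetaQ a) = j * PowerSeries.coeff j a := by
  simp [thetaQ]

lemma coeff_iotaQ (p : ℕ) (a : PowerSeries R) (j : ℕ) :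
    PowerSeries.coeff j (iotaQ p a) = if p ∣ j then 0 else PowerSeries.coeff j a := by
  simp [iotaQ]

lemma coeff_iotaPoly (p : ℕ) (F : (PowerSeries R)[X]) (i : ℕ) :
    (iotaPoly p F).coeff i = iotaQ p (F.coeff i) := by
  rw [iotaPoly, coeff_sum, sum_def]
  simp only [coeff_C_mul_X_pow, Finset.sum_ite_eq]
  split_ifs with h <;> simp_all

lemma coeff_delta_zero (m : ℤ) (F : (PowerSeries R)[X]) :
    (delta m F).coeff 0 = thetaQ (F.coeff 0) := by
  rw [delta, coeff_sum, sum_def]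
  simp only [coeff_add, coeff_C_mul_X_pow, (Nat.succ_ne_zero _).symm, if_false, add_zero,
    Finset.sum_ite_eq]
  split_ifs with h <;> simp_all

lemma coeff_delta_succ (m : ℤ) (F : (PowerSeries R)[X]) (i : ℕ) :
    (delta m F).coeff (i + 1)
      = thetaQ (F.coeff (i + 1)) + ((m - i : ℤ) : PowerSeries R) * F.coeff i := by
  rw [delta, coeff_sum, sum_def]
  simp only [coeff_add, coeff_C_mul_X_pow, Nat.succ_inj, Finset.sum_add_distrib, Finset.sum_ite_eq]
  split_ifs <;> simp_all

lemma coeff_coeff_deltaIter_succ_zero (w : ℤ) (t : ℕ) (F : (PowerSeries R)[X]) (j : ℕ) :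
    PowerSeries.coeff j ((deltaIter w (t + 1) F).coeff 0)
      = j * PowerSeries.coeff j ((deltaIter w t F).coeff 0) := by
  rw [deltaIter, coeff_delta_zero, coeff_thetaQ]

lemma coeff_coeff_deltaIter_succ_succ (w : ℤ) (t : ℕ) (F : (PowerSeries R)[X]) (i j : ℕ) :
    PowerSeries.coeff j ((deltaIter w (t + 1) F).coeff (i + 1))
      = j * PowerSeries.coeff j ((deltaIter w t F).coeff (i + 1))
        + ((w + 2 * t - i : ℤ) : R) * PowerSeries.coeff j ((deltaIter w t F).coeff i) := by
  rw [deltaIter, coeff_delta_succ, map_add, coeff_thetaQ, ← zsmul_eq_mul, map_zsmul, zsmul_eq_mul]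

theorem coeff_coeff_deltaIter (w : ℤ) (t : ℕ) (F : (PowerSeries R)[X]) (i j : ℕ) :
    PowerSeries.coeff j ((deltaIter w t F).coeff i)
      = ∑ x ∈ antidiagonal i,
          (deltaIterWeight w j t x.1 x.2 : R) * PowerSeries.coeff j (F.coeff x.2) := by
  induction t generalizing i with
  | zero =>
    rw [Finset.Nat.sum_antidiagonal_eq_sum_range_succ_mk, Finset.sum_range_succ']
    simp [deltaIterWeight_zero, deltaIter]
  | succ t ih =>
    rcases i with _ | i
    · simp [coeff_coeff_deltaIter_succ_zero, ih, deltaIterWeight_succ_zero, mul_assoc]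
    · have hweight : ((w + 2 * t - i : ℤ) : R) * ∑ x ∈ antidiagonal i,
              (deltaIterWeight w j t x.1 x.2 : R) * PowerSeries.coeff j (F.coeff x.2)
          = ∑ x ∈ antidiagonal i,
              ((w + 2 * t - (x.1 + x.2)) * deltaIterWeight w j t x.1 x.2 : ℤ)
                * PowerSeries.coeff j (F.coeff x.2) := by
        rw [Finset.mul_sum]
        refine Finset.sum_congr rfl fun x hx => ?_
        rw [← mem_antidiagonal.mp hx]
        push_cast
        ring
      rw [coeff_coeff_deltaIter_succ_succ, ih, ih, hweight, Finset.Nat.sum_antidiagonal_succ,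
        Finset.Nat.sum_antidiagonal_succ]
      simp only [deltaIterWeight_succ_zero, deltaIterWeight_succ_succ, Int.cast_add, Int.cast_mul,
        Int.cast_natCast, add_mul, Finset.sum_add_distrib, mul_add, Finset.mul_sum, mul_assoc]
      ring

end Coefficients

theorem stmt19_general (p : ℕ) [Fact p.Prime] (n : ℕ)
    (k k' s s' s₀ : ℕ)
    (hkk : ((p : ℤ) ^ n * ((p : ℤ) - 1)) ∣ ((k : ℤ) - (k' : ℤ)))
    (hs' : s' = s + s₀ * (p ^ n * (p - 1)))
    (hbig : n + 1 ≤ s₀ * (p ^ n * (p - 1)))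
    (f f' : Polynomial (PowerSeries ℤ_[p]))
    (hcong : ∀ i j, (p : ℤ_[p]) ^ n ∣ PowerSeries.coeff j ((f - f').coeff i)) :
    ∀ i j, (p : ℤ_[p]) ^ n ∣
      PowerSeries.coeff j
        ((iotaPoly p (deltaIter (k : ℤ) s f) - deltaIter (k' : ℤ) s' f').coeff i) := by
  intro i j
  set m := s₀ * (p ^ n * (p - 1))
  have hm : p ^ n * (p - 1) ∣ m := dvd_mul_left _ _
  have hpm : (p : ℤ) ^ n ∣ m := by exact_mod_cast (dvd_mul_right _ _).trans hm
  have hk : (p : ℤ) ^ n ∣ (k' : ℤ) - k := dvd_sub_comm.mp ((dvd_mul_right _ _).trans hkk)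
  have hcast (z : ℤ) (hz : (p : ℤ) ^ n ∣ z) : (p : ℤ_[p]) ^ n ∣ (z : ℤ_[p]) := by
    exact_mod_cast Int.cast_dvd_cast _ _ hz
  rw [hs', coeff_sub, map_sub, coeff_iotaPoly, coeff_iotaQ, coeff_coeff_deltaIter,
    coeff_coeff_deltaIter]
  split_ifs with hj
  · have hjn : (p : ℤ) ^ n ∣ (j : ℤ) ^ n := pow_dvd_pow_of_dvd (by exact_mod_cast hj) n
    rw [zero_sub, dvd_neg]
    exact Finset.dvd_sum fun x _ => dvd_mul_of_dvd_left
      (hcast _ (deltaIterWeight_add_dvd x.1 x.2 hpm hjn (by omega))) _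
  · have hjm := prime_pow_dvd_pow_sub_one Fact.out hm hj
    rw [← Finset.sum_sub_distrib]
    refine Finset.dvd_sum fun x _ => ?_
    have hf := hcong x.2 j
    rw [coeff_sub, map_sub] at hf
    have hW := hcast _ (deltaIterWeight_add_sub_dvd (t := s) x.1 x.2 hpm hjm hk)
    rw [Int.cast_sub] at hW
    rw [show ∀ a a' b b' : ℤ_[p], a * b - a' * b' = -((a' - a) * b) + a' * (b - b') by
      intros; ring]
    exact dvd_add (dvd_mul_of_dvd_left hW _).neg_right (dvd_mul_of_dvd_right hf _)

/-- If `k ≡ k' (mod p^n(p−1))`, `s' = s + s₀·p^n(p−1)` with `s₀ ≥ 1` and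
`s₀·p^n(p−1) ≥ n+1`, and `f ≡ f' (mod p^n)` coefficientwise with the same `X`-degree, then
`(δ_k^s f)|ι_p ≡ δ_{k'}^{s'} f' (mod p^n)` coefficientwise. -/
theorem stmt19 (p : ℕ) [Fact p.Prime] (hodd : Odd p) (n : ℕ) (hn : 1 ≤ n)
    (k k' s s' s₀ : ℕ)
    (hkk : ((p : ℤ) ^ n * ((p : ℤ) - 1)) ∣ ((k : ℤ) - (k' : ℤ)))
    (hs' : s' = s + s₀ * (p ^ n * (p - 1)))
    (hs₀ : 1 ≤ s₀) (hbig : n + 1 ≤ s₀ * (p ^ n * (p - 1)))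
    (f f' : Polynomial (PowerSeries ℤ_[p]))
    (hdeg : f.natDegree = f'.natDegree)
    (hcong : ∀ i j, (p : ℤ_[p]) ^ n ∣ PowerSeries.coeff j ((f - f').coeff i)) :
    ∀ i j, (p : ℤ_[p]) ^ n ∣
      PowerSeries.coeff j
        ((iotaPoly p (deltaIter (k : ℤ) s f) - deltaIter (k' : ℤ) s' f').coeff i) :=
  stmt19_general p n k k' s s' s₀ hkk hs' hbig f f' hcong
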